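/- For every real τ > 0, every real h with 0 < h < 2, and every dimension d ≥ 1, one has Σ_{ν ∈ ℤ^d \ {0}} |ν|^τ e^{-h|ν|} ≤ 2^{3d} (2τ/e)^τ h^{-τ-d}, where |ν| = Σ_{i=1}^d |ν_i|. -/

import Mathlib

/-!
Since `x ^ τ * exp (-(h/2) x) ≤ (2τ / (e h)) ^ τ` for `x ≥ 0`, each term is at most
`(2τ / (e h)) ^ τ * exp (-(h/2) |ν|)`. The exponential factorises over the coordinates, so the sum
of the majorant over all of `ℤ^d` is the `d`-th power of the two-sided geometric series
`Σ_{n ∈ ℤ} exp (-(h/2) |n|) = coth (h/4) ≤ 1 + 4/h`, which is at most `8/h` as `h ≤ 4`.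
-/

/-- `|ν| = Σ_i |ν_i|`, the ℓ¹ norm of an integer vector. -/
noncomputable def l1 {d : ℕ} (ν : Fin d → ℤ) : ℝ := ∑ i, |(ν i : ℝ)|

open Real

lemma l1_nonneg {d : ℕ} (ν : Fin d → ℤ) : 0 ≤ l1 ν :=
  Finset.sum_nonneg fun _ _ ↦ abs_nonneg _

/-- The maximum of `x ^ τ * exp (-a x)` over `x ≥ 0` is attained at `x = τ / a`. -/
lemma rpow_mul_exp_neg_mul_le {τ a x : ℝ} (hτ : 0 < τ) (ha : 0 < a) (hx : 0 ≤ x) :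
    x ^ τ * exp (-a * x) ≤ (τ / (exp 1 * a)) ^ τ := by
  have hx_eq : x = τ / (exp 1 * a) * (exp 1 * (a * x / τ)) := by field_simp
  have hexp : exp (a * x / τ) ^ τ = exp (a * x) := by rw [← exp_mul]; congr 1; field_simp
  calc x ^ τ * exp (-a * x)
      = (τ / (exp 1 * a)) ^ τ * ((exp 1 * (a * x / τ)) ^ τ * exp (-(a * x))) := by
        rw [← mul_assoc, ← mul_rpow (by positivity) (by positivity), ← hx_eq, neg_mul]
    _ ≤ (τ / (exp 1 * a)) ^ τ * (exp (a * x / τ) ^ τ * exp (-(a * x))) := by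
        gcongr; exact exp_one_mul_le_exp
    _ = (τ / (exp 1 * a)) ^ τ := by rw [hexp, ← exp_add, add_neg_cancel, exp_zero, mul_one]

lemma hasSum_pow_natAbs {r : ℝ} (hr₀ : 0 ≤ r) (hr₁ : r < 1) :
    HasSum (fun n : ℤ ↦ r ^ n.natAbs) ((1 + r) / (1 - r)) := by
  have hgeom : HasSum (fun n : ℕ ↦ r ^ n) (1 - r)⁻¹ := hasSum_geometric_of_lt_one hr₀ hr₁
  have hsplit : (1 + r) / (1 - r) = (1 - r)⁻¹ + (1 - r)⁻¹ - r ^ (0 : ℤ).natAbs := by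
    have : 1 - r ≠ 0 := by linarith
    field_simp
    ring
  rw [hsplit]
  exact HasSum.of_nat_of_neg (by simpa using hgeom) (by simpa using hgeom)

lemma HasSum.pi_fin_prod {ι : Type*} {f : ι → ℝ} {S : ℝ} (hf : HasSum f S) (hf₀ : 0 ≤ f)
    (d : ℕ) : HasSum (fun ν : Fin d → ι ↦ ∏ k, f (ν k)) (S ^ d) := by
  induction d with
  | zero => simp
  | succ d ih =>
    refine (Equiv.hasSum_iff (Fin.consEquiv fun _ ↦ ι)).mp ?_
    set g := fun ν : Fin d → ι ↦ ∏ k, f (ν k)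
    have hg₀ : 0 ≤ g := fun ν ↦ Finset.prod_nonneg fun k _ ↦ hf₀ (ν k)
    have hsum : Summable fun z : ι × (Fin d → ι) ↦ f z.1 * g z.2 :=
      hf.summable.mul_of_nonneg ih.summable hf₀ hg₀
    have hcons : (fun ν : Fin (d + 1) → ι ↦ ∏ k, f (ν k)) ∘ Fin.consEquiv (fun _ ↦ ι) =
        fun z : ι × (Fin d → ι) ↦ f z.1 * g z.2 := by
      ext z
      exact Fin.prod_univ_succ _
    rw [hcons, pow_succ']
    exact hf.mul ih hsum

lemma exp_neg_mul_l1 {d : ℕ} (a : ℝ) (ν : Fin d → ℤ) :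
    exp (-a * l1 ν) = ∏ k, exp (-a) ^ (ν k).natAbs := by
  simp only [l1, Finset.mul_sum, exp_sum, ← exp_nat_mul, Nat.cast_natAbs, Int.cast_abs, mul_comm]

lemma hasSum_exp_neg_mul_l1 {a : ℝ} (ha : 0 < a) (d : ℕ) :
    HasSum (fun ν : Fin d → ℤ ↦ exp (-a * l1 ν)) (((1 + exp (-a)) / (1 - exp (-a))) ^ d) := by
  simp only [exp_neg_mul_l1]
  exact (hasSum_pow_natAbs (exp_pos _).le (exp_lt_one_iff.mpr (by linarith))).pi_fin_prod
    (fun n ↦ by positivity) d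

lemma one_add_exp_neg_div_one_sub_exp_neg_le {a : ℝ} (ha : 0 < a) :
    (1 + exp (-a)) / (1 - exp (-a)) ≤ 1 + 2 / a := by
  have hr : exp (-a) < 1 := exp_lt_one_iff.mpr (by linarith)
  have hr' : exp (-a) * (1 + a) ≤ 1 :=
    calc exp (-a) * (1 + a) ≤ exp (-a) * exp a := by gcongr; linarith [add_one_le_exp a]
      _ = 1 := by rw [← exp_add, neg_add_cancel, exp_zero]
  rw [div_le_iff₀ (by linarith)]
  field_simp
  nlinarith

lemma HasSum.summable_subtype_and_tsum_le {α : Type*} {f g : α → ℝ} {G : ℝ} (hg : HasSum g G)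
    (hf₀ : 0 ≤ f) (hfg : f ≤ g) (s : Set α) :
    Summable (fun x : s ↦ f x) ∧ ∑' x : s, f x ≤ G := by
  have hgs := hg.summable.subtype s
  have hfs : Summable fun x : s ↦ f x := hgs.of_nonneg_of_le (fun x ↦ hf₀ x) (fun x ↦ hfg x)
  refine ⟨hfs, ?_⟩
  calc ∑' x : s, f x ≤ ∑' x : s, g x := hfs.tsum_le_tsum (fun x ↦ hfg x) hgs
    _ ≤ ∑' x, g x := hg.summable.tsum_subtype_le g s fun x ↦ (hf₀ x).trans (hfg x)
    _ = G := hg.tsum_eq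

theorem sum_pow_mul_exp_le_general (d : ℕ) (τ : ℝ) (hτ : 0 < τ)
    (h : ℝ) (h0 : 0 < h) (h2 : h < 2) :
    Summable (fun ν : {ν : Fin d → ℤ // ν ≠ 0} => l1 ν.1 ^ τ * Real.exp (-h * l1 ν.1)) ∧
    ∑' ν : {ν : Fin d → ℤ // ν ≠ 0}, l1 ν.1 ^ τ * Real.exp (-h * l1 ν.1) ≤
      2 ^ (3 * d) * (2 * τ / Real.exp 1) ^ τ * h ^ (-τ - d) := by
  set a := h / 2 with ha_def
  have ha : 0 < a := half_pos h0
  set K := (τ / (exp 1 * a)) ^ τ with hK_def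
  have hterm (ν : Fin d → ℤ) : l1 ν ^ τ * exp (-h * l1 ν) ≤ K * exp (-a * l1 ν) := by
    rw [show -h * l1 ν = -a * l1 ν + -a * l1 ν by ring, exp_add, ← mul_assoc]
    gcongr
    exact rpow_mul_exp_neg_mul_le hτ ha (l1_nonneg ν)
  obtain ⟨hsum, hle⟩ := ((hasSum_exp_neg_mul_l1 ha d).mul_left K).summable_subtype_and_tsum_le
    (fun ν ↦ by have := l1_nonneg ν; positivity) hterm {ν | ν ≠ 0}
  refine ⟨hsum, hle.trans ?_⟩
  have hS₀ : 0 ≤ (1 + exp (-a)) / (1 - exp (-a)) :=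
    div_nonneg (by positivity) (sub_nonneg.mpr (exp_le_one_iff.mpr (by linarith)))
  have hS : (1 + exp (-a)) / (1 - exp (-a)) ≤ 8 / h :=
    (one_add_exp_neg_div_one_sub_exp_neg_le ha).trans <| by
      rw [ha_def, ← sub_nonneg]; field_simp; linarith
  have hK : K = (2 * τ / exp 1) ^ τ / h ^ τ := by
    rw [hK_def, ha_def, ← div_rpow (by positivity) h0.le]
    congr 1
    field_simp
  calc K * ((1 + exp (-a)) / (1 - exp (-a))) ^ d ≤ K * (8 / h) ^ d := by gcongr
    _ = 2 ^ (3 * d) * (2 * τ / exp 1) ^ τ * h ^ (-τ - d) := by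
        rw [hK, rpow_sub h0, rpow_neg h0.le, rpow_natCast, div_pow,
          show (8 : ℝ) = 2 ^ 3 by norm_num, ← pow_mul]
        field_simp

/-- for `τ > 0`, `0 < h < 2` and `d ≥ 1`,
`Σ_{ν ∈ ℤ^d \ {0}} |ν|^τ e^{-h|ν|} ≤ 2^{3d} (2τ/e)^τ h^{-τ-d}`. -/
theorem sum_pow_mul_exp_le (d : ℕ) (hd : 1 ≤ d) (τ : ℝ) (hτ : 0 < τ)
    (h : ℝ) (h0 : 0 < h) (h2 : h < 2) :
    Summable (fun ν : {ν : Fin d → ℤ // ν ≠ 0} => l1 ν.1 ^ τ * Real.exp (-h * l1 ν.1)) ∧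
    ∑' ν : {ν : Fin d → ℤ // ν ≠ 0}, l1 ν.1 ^ τ * Real.exp (-h * l1 ν.1) ≤
      2 ^ (3 * d) * (2 * τ / Real.exp 1) ^ τ * h ^ (-τ - d) :=
  sum_pow_mul_exp_le_general d τ hτ h h0 h2
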